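/- arXiv:1906.06234 — 2 statements merged into one kernel-verified Lean document; each statement's English description precedes it below -/
import Mathlib

section
/- Let ε₀ satisfy π/τ ≤ ε₀ < π and let ε be uniformly distributed on the interval [-ε₀, ε₀]. Then for every g with 0 < g ≤ Gm, the probability that G(ε) ≤ g equals 1 − (2/(τ·ε₀))·arccos(√(g/Gm)); equivalently, the Lebesgue measure of the set {θ ∈ [-ε₀, ε₀] : G(θ) ≤ g}, divided by 2ε₀, equals 1 − (2/(τ·ε₀))·arccos(√(g/Gm)). -/
open Real MeasureTheory

/-- The cosine antenna gain with maximum gain `Gm` and beam-spread parameter `τ`. -/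
noncomputable def gain (Gm τ θ : ℝ) : ℝ :=
  if |θ| ≤ Real.pi / τ then Gm * Real.cos (τ * θ / 2) ^ 2 else 0

theorem cdf_uniform_large_error (Gm τ ε₀ : ℝ) (hGm : 0 < Gm) (hτ : 1 ≤ τ)
    (hε₁ : Real.pi / τ ≤ ε₀) (hε₂ : ε₀ < Real.pi) :
    ∀ g : ℝ, 0 < g → g ≤ Gm →
      (volume {θ ∈ Set.Icc (-ε₀) ε₀ | gain Gm τ θ ≤ g}).toReal / (2 * ε₀)
        = 1 - 2 / (τ * ε₀) * Real.arccos (Real.sqrt (g / Gm)) := by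
  intro g hg hgGm
  have hτ0 : 0 < τ := lt_of_lt_of_le one_pos hτ
  have hε0 : 0 < ε₀ := lt_of_lt_of_le (div_pos Real.pi_pos hτ0) hε₁
  set s := Real.sqrt (g / Gm) with hs
  have hs0 : 0 ≤ s := Real.sqrt_nonneg _
  have hs1 : s ≤ 1 := by
    rw [hs, show (1:ℝ) = Real.sqrt 1 by simp]
    exact Real.sqrt_le_sqrt (by rw [div_le_one hGm]; exact hgGm)
  set a := Real.arccos s with ha
  have ha0 : 0 ≤ a := Real.arccos_nonneg _
  have haπ2 : a ≤ Real.pi / 2 := by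
    rw [ha, Real.arccos_le_pi_div_two]; exact hs0
  have hcos : Real.cos a = s := Real.cos_arccos (le_trans (by norm_num) hs0) hs1
  have haε : 2 * a / τ ≤ ε₀ := by
    calc 2 * a / τ ≤ Real.pi / τ := by gcongr; linarith
      _ ≤ ε₀ := hε₁
  -- key pointwise characterization
  have key : ∀ θ : ℝ, gain Gm τ θ ≤ g ↔ 2 * a / τ ≤ |θ| := by
    intro θ
    unfold gain
    by_cases hθ : |θ| ≤ Real.pi / τ
    · rw [if_pos hθ]
      have huabs : |τ * θ / 2| = τ * |θ| / 2 := by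
        rw [abs_div, abs_mul, abs_of_pos hτ0]; simp
      have hu2 : |τ * θ / 2| ≤ Real.pi / 2 := by
        rw [huabs]
        have : τ * |θ| ≤ Real.pi := by
          calc τ * |θ| ≤ τ * (Real.pi / τ) := by gcongr
            _ = Real.pi := by field_simp
        linarith
      obtain ⟨hul, hur⟩ := abs_le.mp hu2
      have hcosu : 0 ≤ Real.cos (τ * θ / 2) :=
        Real.cos_nonneg_of_mem_Icc ⟨hul, hur⟩
      have hcoseq : Real.cos (τ * θ / 2) = Real.cos (τ * |θ| / 2) := by
        rw [← huabs, Real.cos_abs]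
      constructor
      · intro h
        have h1 : Real.cos (τ * θ / 2) ^ 2 ≤ s ^ 2 := by
          rw [hs, Real.sq_sqrt (le_of_lt (div_pos hg hGm)), le_div_iff₀ hGm,
            mul_comm]
          exact h
        have h2 : Real.cos (τ * θ / 2) ≤ s := by
          nlinarith
        rw [hcoseq, ← hcos] at h2
        have h3 : a ≤ τ * |θ| / 2 := by
          by_contra hc
          push_neg at hc
          have := Real.cos_lt_cos_of_nonneg_of_le_pi
            (by positivity) (by linarith [Real.pi_pos]) hc
          linarith
        rw [div_le_iff₀ hτ0]; linarith
      · intro h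
        have h3 : a ≤ τ * |θ| / 2 := by
          rw [div_le_iff₀ hτ0] at h; linarith
        have h2 : Real.cos (τ * |θ| / 2) ≤ Real.cos a := by
          apply Real.cos_le_cos_of_nonneg_of_le_pi ha0 _ h3
          rw [← huabs]; linarith [Real.pi_pos]
        rw [hcos] at h2
        rw [← hcoseq] at h2
        have h1 : Real.cos (τ * θ / 2) ^ 2 ≤ s ^ 2 := by nlinarith
        rw [hs, Real.sq_sqrt (le_of_lt (div_pos hg hGm))] at h1
        rw [le_div_iff₀ hGm] at h1; linarith
    · rw [if_neg hθ]
      push_neg at hθ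
      constructor
      · intro _
        calc 2 * a / τ ≤ Real.pi / τ := by gcongr; linarith
          _ ≤ |θ| := hθ.le
      · intro _; linarith
  -- rewrite the set
  have hset : {θ ∈ Set.Icc (-ε₀) ε₀ | gain Gm τ θ ≤ g}
      = Set.Icc (-ε₀) ε₀ \ Set.Ioo (-(2 * a / τ)) (2 * a / τ) := by
    ext θ
    simp only [Set.mem_setOf_eq, Set.mem_diff, Set.mem_Ioo, key, Set.mem_Icc]
    constructor
    · rintro ⟨hθ, h⟩
      refine ⟨hθ, ?_⟩
      rintro ⟨h1, h2⟩
      rcases abs_le.mp (le_refl |θ|) with _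
      rcases le_or_gt 0 θ with h3 | h3
      · rw [abs_of_nonneg h3] at h; linarith
      · rw [abs_of_neg h3] at h; linarith
    · rintro ⟨hθ, h⟩
      refine ⟨hθ, ?_⟩
      by_contra hc
      push_neg at hc
      rcases abs_lt.mp hc with ⟨h1, h2⟩
      exact h ⟨by linarith, by linarith⟩
  rw [hset]
  have hsub : Set.Ioo (-(2 * a / τ)) (2 * a / τ) ⊆ Set.Icc (-ε₀) ε₀ := by
    apply Set.Ioo_subset_Icc_self.trans
    apply Set.Icc_subset_Icc <;> linarith
  rw [measure_diff hsub measurableSet_Ioo.nullMeasurableSet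
    (ne_of_lt (lt_of_le_of_lt (measure_mono hsub) (by
      rw [Real.volume_Icc]; exact ENNReal.ofReal_lt_top)))]
  rw [Real.volume_Icc, Real.volume_Ioo]
  have h4a : (0:ℝ) ≤ 2 * a / τ := by positivity
  rw [show (2 * a / τ - -(2 * a / τ)) = 4 * a / τ by ring]
  rw [show (ε₀ - -ε₀) = 2 * ε₀ by ring]
  rw [← ENNReal.ofReal_sub _ (by positivity)]
  rw [ENNReal.toReal_ofReal (by rw [sub_nonneg, div_le_iff₀ hτ0]; rw [div_le_iff₀ hτ0] at haε; linarith)]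
  field_simp
  ring
end

section
/- Let ε₀ satisfy 0 < ε₀ < π/τ and set κ = cos²(τ·ε₀/2). Let ε be uniformly distributed on [-ε₀, ε₀]. Then for every g with κ·Gm ≤ g ≤ Gm, the probability that G(ε) ≤ g equals 1 − (2/(τ·ε₀))·arccos(√(g/Gm)), and for every g with 0 ≤ g < κ·Gm, the probability that G(ε) ≤ g equals 0. -/
open Real MeasureTheory

/-!
On the main lobe `G(θ) = Gm cos²(τθ/2)` is even and decreasing in `|θ|`, so `G(θ) ≤ g` holds exactly
when `|θ|` is at least the angle `a = 2 arccos √(g/Gm) / τ` at which the gain falls to `g`. The event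
`G(ε) ≤ g` is therefore `[-ε₀, ε₀]` minus the open interval `(-a, a)`, of length `2(ε₀ - a)` when
`a ≤ ε₀` (that is, `κ Gm ≤ g`) and empty otherwise.
-/

noncomputable def gainLevelAngle (Gm τ g : ℝ) : ℝ :=
  2 * arccos (√(g / Gm)) / τ

lemma arccos_le_iff_cos_le {x y : ℝ} (hx₀ : 0 ≤ x) (hx : x < π) :
    arccos y ≤ x ↔ cos x ≤ y := by
  rw [arccos, sub_le_comm, le_arcsin_iff_sin_le' ⟨by linarith, by linarith⟩, sin_pi_div_two_sub]

lemma cos_sq_le_iff_arccos_sqrt_le {x c : ℝ} (hx : |x| ≤ π / 2) (hc : 0 ≤ c) :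
    cos x ^ 2 ≤ c ↔ arccos √c ≤ |x| := by
  have hcos : 0 ≤ cos x :=
    cos_nonneg_of_neg_pi_div_two_le_of_le (abs_le.1 hx).1 (abs_le.1 hx).2
  rw [arccos_le_iff_cos_le (abs_nonneg x) (by linarith [pi_pos]), cos_abs, Real.le_sqrt hcos hc]

lemma gain_of_abs_le {Gm τ θ : ℝ} (hθ : |θ| ≤ π / τ) : gain Gm τ θ = Gm * cos (τ * θ / 2) ^ 2 :=
  if_pos hθ

lemma gain_le_iff {Gm τ θ g : ℝ} (hGm : 0 < Gm) (hτ : 0 < τ) (hθ : |θ| ≤ π / τ) (hg : 0 ≤ g) :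
    gain Gm τ θ ≤ g ↔ gainLevelAngle Gm τ g ≤ |θ| := by
  have habs : |τ * θ / 2| = τ * |θ| / 2 := by
    rw [abs_div, abs_mul, abs_of_pos hτ, abs_two]
  have hlobe : |τ * θ / 2| ≤ π / 2 := by
    rw [habs, div_le_div_iff_of_pos_right two_pos, ← le_div_iff₀' hτ]
    exact hθ
  rw [gain_of_abs_le hθ, ← le_div_iff₀' hGm,
    cos_sq_le_iff_arccos_sqrt_le hlobe (div_nonneg hg hGm.le), habs, gainLevelAngle,
    div_le_iff₀ hτ]
  constructor <;> intro h <;> linarith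

lemma volume_setOf_le_abs_of_mem_Icc {a r : ℝ} (ha : 0 ≤ a) :
    volume {θ ∈ Set.Icc (-r) r | a ≤ |θ|} = ENNReal.ofReal (2 * (r - a)) := by
  rcases le_or_gt a r with har | hra
  · have hset : {θ ∈ Set.Icc (-r) r | a ≤ |θ|} = Set.Icc (-r) r \ Set.Ioo (-a) a := by
      ext θ
      simp only [Set.mem_ofPred_eq, Set.mem_sdiff, Set.mem_Ioo, ← abs_lt, not_lt]
    have hsub : Set.Ioo (-a) a ⊆ Set.Icc (-r) r :=
      Set.Ioo_subset_Icc_self.trans (Set.Icc_subset_Icc (by linarith) har)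
    rw [hset, measure_sdiff hsub measurableSet_Ioo.nullMeasurableSet measure_Ioo_lt_top.ne,
      Real.volume_Icc, Real.volume_Ioo, ← ENNReal.ofReal_sub _ (by linarith)]
    ring_nf
  · have hempty : {θ ∈ Set.Icc (-r) r | a ≤ |θ|} = ∅ := by
      ext θ
      simp only [Set.mem_ofPred_eq, Set.mem_empty_iff_false, iff_false, not_and, not_le]
      exact fun hθ => (abs_le.2 hθ).trans_lt hra
    rw [hempty, measure_empty, ENNReal.ofReal_of_nonpos (by linarith)]

theorem cdf_uniform_small_error_general (Gm τ ε₀ κ : ℝ) (hGm : 0 < Gm)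
    (hε₁ : 0 < ε₀) (hε₂ : ε₀ < Real.pi / τ) (hκ : κ = Real.cos (τ * ε₀ / 2) ^ 2) :
    (∀ g : ℝ, κ * Gm ≤ g → g ≤ Gm →
      (volume {θ ∈ Set.Icc (-ε₀) ε₀ | gain Gm τ θ ≤ g}).toReal / (2 * ε₀)
        = 1 - 2 / (τ * ε₀) * Real.arccos (Real.sqrt (g / Gm))) ∧
    (∀ g : ℝ, 0 ≤ g → g < κ * Gm →
      (volume {θ ∈ Set.Icc (-ε₀) ε₀ | gain Gm τ θ ≤ g}).toReal / (2 * ε₀) = 0) := by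
  have hτ : 0 < τ := (div_pos_iff_of_pos_left pi_pos).1 (hε₁.trans hε₂)
  have hε : |ε₀| ≤ π / τ := (abs_of_pos hε₁).trans_le hε₂.le
  have hevent : ∀ g, 0 ≤ g → {θ ∈ Set.Icc (-ε₀) ε₀ | gain Gm τ θ ≤ g}
      = {θ ∈ Set.Icc (-ε₀) ε₀ | gainLevelAngle Gm τ g ≤ |θ|} := fun g hg =>
    Set.sep_ext_iff.2 fun θ hθ => gain_le_iff hGm hτ ((abs_le.2 hθ).trans hε₂.le) hg
  have hedge : ∀ g, 0 ≤ g → (κ * Gm ≤ g ↔ gainLevelAngle Gm τ g ≤ ε₀) := fun g hg => by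
    rw [← abs_of_pos hε₁, ← gain_le_iff hGm hτ hε hg, gain_of_abs_le hε, hκ, mul_comm]
  have hangle : ∀ g, 0 ≤ gainLevelAngle Gm τ g := fun g =>
    div_nonneg (mul_nonneg zero_le_two (arccos_nonneg _)) hτ.le
  refine ⟨fun g hgκ _ => ?_, fun g hg hgκ => ?_⟩
  · have hg : 0 ≤ g := (mul_nonneg (hκ ▸ sq_nonneg _) hGm.le).trans hgκ
    rw [hevent g hg, volume_setOf_le_abs_of_mem_Icc (hangle g),
      ENNReal.toReal_ofReal (by linarith [(hedge g hg).1 hgκ]), gainLevelAngle]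
    field_simp
  · rw [hevent g hg, volume_setOf_le_abs_of_mem_Icc (hangle g),
      ENNReal.ofReal_of_nonpos (by linarith [not_le.1 ((hedge g hg).not.1 hgκ.not_ge)]),
      ENNReal.toReal_zero, zero_div]

theorem cdf_uniform_small_error (Gm τ ε₀ κ : ℝ) (hGm : 0 < Gm) (hτ : 1 ≤ τ)
    (hε₁ : 0 < ε₀) (hε₂ : ε₀ < Real.pi / τ) (hκ : κ = Real.cos (τ * ε₀ / 2) ^ 2) :
    (∀ g : ℝ, κ * Gm ≤ g → g ≤ Gm →
      (volume {θ ∈ Set.Icc (-ε₀) ε₀ | gain Gm τ θ ≤ g}).toReal / (2 * ε₀)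
        = 1 - 2 / (τ * ε₀) * Real.arccos (Real.sqrt (g / Gm))) ∧
    (∀ g : ℝ, 0 ≤ g → g < κ * Gm →
      (volume {θ ∈ Set.Icc (-ε₀) ε₀ | gain Gm τ θ ≤ g}).toReal / (2 * ε₀) = 0) :=
  cdf_uniform_small_error_general Gm τ ε₀ κ hGm hε₁ hε₂ hκ
end
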